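/- arXiv:1407.6857 — 5 statements merged into one kernel-verified Lean document; each statement's English description precedes it below -/
import Mathlib

section
/- With the same setup, if γ₁, γ₂ ∈ Δ_𝔞 are strongly orthogonal and δ ∈ Δ⁺ satisfies γ₁−δ ∈ Δ_𝔞, then γ₂−δ ∉ Δ_𝔞. -/
open RealInnerProductSpace

/-!
Roots with negative inner product have a root as sum, so the roots of an abelian ideal have
pairwise nonnegative inner products; dually, strong orthogonality gives `⟪γ₁, γ₂⟫ ≤ 0`. If both
`γ₁ - δ` and `γ₂ - δ` lay in the ideal, then
`⟪γ₁ - δ, γ₂ - δ⟫ = ⟪γ₁ - δ, γ₂⟫ + ⟪γ₂ - δ, γ₁⟫ - ⟪γ₁, γ₂⟫ + ⟪δ, δ⟫ > 0`,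
so their difference `γ₁ - γ₂` would be a root.
-/

structure RootSystemData (V : Type*) [NormedAddCommGroup V] [InnerProductSpace ℝ V] where
  Δ : Set V
  finite : Δ.Finite
  nonzero : ∀ α ∈ Δ, α ≠ (0 : V)
  neg_mem : ∀ α ∈ Δ, -α ∈ Δ
  reduced : ∀ α ∈ Δ, ∀ t : ℝ, t • α ∈ Δ → t = 1 ∨ t = -1
  crystallographic : ∀ α ∈ Δ, ∀ β ∈ Δ, ∃ n : ℤ, 2 * ⟪β, α⟫ = (n : ℝ) * ⟪α, α⟫
  reflect_mem : ∀ α ∈ Δ, ∀ β ∈ Δ, β - (2 * ⟪β, α⟫ / ⟪α, α⟫) • α ∈ Δ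

variable {V : Type*} [NormedAddCommGroup V] [InnerProductSpace ℝ V]

def IsPositiveSystem (R : RootSystemData V) (P : Set V) : Prop :=
  P ⊆ R.Δ ∧ (∀ α ∈ R.Δ, α ∈ P ∨ -α ∈ P) ∧ (∀ α ∈ P, -α ∉ P) ∧
    ∀ α ∈ P, ∀ β ∈ P, α + β ∈ R.Δ → α + β ∈ P

def IsCombinatorialAbelianIdeal (R : RootSystemData V) (P Δa : Set V) : Prop :=
  Δa ⊆ P ∧ (∀ γ ∈ Δa, ∀ μ ∈ P, γ + μ ∈ P → γ + μ ∈ Δa) ∧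
    ∀ γ₁ ∈ Δa, ∀ γ₂ ∈ Δa, γ₁ + γ₂ ∉ R.Δ

def StronglyOrthogonal (R : RootSystemData V) (γ₁ γ₂ : V) : Prop :=
  γ₁ ≠ γ₂ ∧ γ₁ + γ₂ ∉ R.Δ ∧ γ₁ - γ₂ ∉ R.Δ

namespace RootSystemData

variable (R : RootSystemData V) {a b : V}

lemma inner_self_pos (ha : a ∈ R.Δ) : 0 < ⟪a, a⟫ :=
  real_inner_self_pos.2 (R.nonzero a ha)

lemma inner_mul_inner_lt (ha : a ∈ R.Δ) (hb : b ∈ R.Δ) (hba : b ≠ a) (hba' : b ≠ -a) :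
    ⟪a, b⟫ * ⟪a, b⟫ < ⟪a, a⟫ * ⟪b, b⟫ := by
  have hne : |⟪a, b⟫| ≠ ‖a‖ * ‖b‖ := by
    intro h
    obtain ⟨r, -, rfl⟩ :=
      (norm_inner_eq_norm_iff (𝕜 := ℝ) (R.nonzero a ha) (R.nonzero _ hb)).1 h
    rcases R.reduced a ha r hb with rfl | rfl
    · exact hba (one_smul ℝ a)
    · exact hba' (neg_one_smul ℝ a)
  have hlt := (abs_real_inner_le_norm a b).lt_of_ne hne
  rw [real_inner_self_eq_norm_mul_norm, real_inner_self_eq_norm_mul_norm, ← abs_mul_abs_self]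
  nlinarith [abs_nonneg ⟪a, b⟫]

lemma sub_mem_of_two_inner_eq (ha : a ∈ R.Δ) (hb : b ∈ R.Δ) (h : 2 * ⟪a, b⟫ = ⟪b, b⟫) :
    a - b ∈ R.Δ := by
  have := R.reflect_mem b hb a ha
  rwa [h, div_self (R.inner_self_pos hb).ne', one_smul] at this

lemma sub_mem_of_inner_pos (ha : a ∈ R.Δ) (hb : b ∈ R.Δ) (hba : b ≠ a) (hab : 0 < ⟪a, b⟫) :
    a - b ∈ R.Δ := by
  have hba' : b ≠ -a := by
    rintro rfl
    linarith [R.inner_self_pos ha, inner_neg_right (𝕜 := ℝ) a a]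
  obtain ⟨n, hn⟩ := R.crystallographic b hb a ha
  obtain ⟨m, hm⟩ := R.crystallographic a ha b hb
  rw [real_inner_comm] at hm
  have haa := R.inner_self_pos ha
  have hbb := R.inner_self_pos hb
  have hn_pos : 0 < n := by
    have : (0 : ℝ) < n := by nlinarith
    exact_mod_cast this
  have hm_pos : 0 < m := by
    have : (0 : ℝ) < m := by nlinarith
    exact_mod_cast this
  have hnm : n * m < 4 := by
    have : ((n * m : ℤ) : ℝ) * (⟪a, a⟫ * ⟪b, b⟫) < 4 * (⟪a, a⟫ * ⟪b, b⟫) := by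
      push_cast
      nlinarith [R.inner_mul_inner_lt ha hb hba hba']
    exact_mod_cast lt_of_mul_lt_mul_right this (by positivity)
  have : n = 1 ∨ m = 1 := by
    by_contra! h
    obtain ⟨hn2, hm2⟩ : 2 ≤ n ∧ 2 ≤ m := by omega
    nlinarith
  rcases this with rfl | rfl
  · exact R.sub_mem_of_two_inner_eq ha hb (by simpa using hn)
  · have hba_mem : b - a ∈ R.Δ :=
      R.sub_mem_of_two_inner_eq hb ha (by rw [real_inner_comm]; simpa using hm)
    simpa using R.neg_mem _ hba_mem

lemma inner_nonneg_of_add_notMem (ha : a ∈ R.Δ) (hb : b ∈ R.Δ) (hab : a ≠ -b)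
    (h : a + b ∉ R.Δ) : 0 ≤ ⟪a, b⟫ := by
  by_contra! hneg
  apply h
  simpa using R.sub_mem_of_inner_pos ha (R.neg_mem b hb) hab.symm (by simpa using hneg)

lemma inner_nonpos_of_sub_notMem (ha : a ∈ R.Δ) (hb : b ∈ R.Δ) (hab : a ≠ b)
    (h : a - b ∉ R.Δ) : ⟪a, b⟫ ≤ 0 := by
  by_contra! hpos
  exact h (R.sub_mem_of_inner_pos ha hb hab.symm hpos)

end RootSystemData

section

variable {R : RootSystemData V} {P Δa : Set V} {a b : V}

lemma IsPositiveSystem.ne_neg (hP : IsPositiveSystem R P) (ha : a ∈ P) (hb : b ∈ P) : a ≠ -b :=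
  fun h => hP.2.2.1 b hb (h ▸ ha)

lemma IsCombinatorialAbelianIdeal.inner_nonneg (hI : IsCombinatorialAbelianIdeal R P Δa)
    (hP : IsPositiveSystem R P) (ha : a ∈ Δa) (hb : b ∈ Δa) : 0 ≤ ⟪a, b⟫ :=
  R.inner_nonneg_of_add_notMem (hP.1 (hI.1 ha)) (hP.1 (hI.1 hb))
    (hP.ne_neg (hI.1 ha) (hI.1 hb)) (hI.2.2 a ha b hb)

end

/-- Lemma 2.2(ii): if `γ₁, γ₂` are strongly orthogonal roots of the abelian ideal `Δa` and
`γ₁ - δ ∈ Δa` for a positive root `δ`, then `γ₂ - δ ∉ Δa`. -/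
theorem stmt1 (R : RootSystemData V) (P Δa : Set V)
    (hP : IsPositiveSystem R P) (hI : IsCombinatorialAbelianIdeal R P Δa)
    {γ₁ γ₂ : V} (h1 : γ₁ ∈ Δa) (h2 : γ₂ ∈ Δa)
    (hso : StronglyOrthogonal R γ₁ γ₂)
    {δ : V} (hδ : δ ∈ P) (hdiff : γ₁ - δ ∈ Δa) :
    γ₂ - δ ∉ Δa := by
  intro hβ
  obtain ⟨hne, -, hsub⟩ := hso
  have mem : ∀ {x}, x ∈ Δa → x ∈ R.Δ := fun hx => hP.1 (hI.1 hx)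
  have h12 : ⟪γ₁, γ₂⟫ ≤ 0 := R.inner_nonpos_of_sub_notMem (mem h1) (mem h2) hne hsub
  have hα2 : 0 ≤ ⟪γ₁ - δ, γ₂⟫ := hI.inner_nonneg hP hdiff h2
  have hβ1 : 0 ≤ ⟪γ₂ - δ, γ₁⟫ := hI.inner_nonneg hP hβ h1
  have hδδ : 0 < ⟪δ, δ⟫ := R.inner_self_pos (hP.1 hδ)
  have hαβ : ⟪γ₁ - δ, γ₂ - δ⟫ = ⟪γ₁ - δ, γ₂⟫ + ⟪γ₂ - δ, γ₁⟫ - ⟪γ₁, γ₂⟫ + ⟪δ, δ⟫ := by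
    simp only [inner_sub_left, inner_sub_right, real_inner_comm δ, real_inner_comm γ₁ γ₂]
    ring
  apply hsub
  simpa using R.sub_mem_of_inner_pos (mem hdiff) (mem hβ) (by simpa using hne.symm)
    (by linarith)
end

section
/- Let M be any subset of a combinatorial abelian ideal Δ_𝔞. Then the set min(M) of minimal elements of M with respect to the root order ≼ is a strongly orthogonal set, and likewise max(M) is strongly orthogonal. -/
open RealInnerProductSpace

variable {V : Type*} [NormedAddCommGroup V] [InnerProductSpace ℝ V]

/-- The root order: `μ ≼ ν` iff `ν - μ` is a nonnegative integer combination of the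
simple roots `Pi`. -/
def rootLE (Pi : Finset V) (μ ν : V) : Prop :=
  ∃ c : V → ℕ, ν - μ = ∑ a ∈ Pi, (c a : ℝ) • a

/-- The set of `≼`-minimal elements of `M`. -/
def minimalElts (Pi : Finset V) (M : Set V) : Set V :=
  {γ ∈ M | ∀ μ ∈ M, rootLE Pi μ γ → μ = γ}

/-- The set of `≼`-maximal elements of `M`. -/
def maximalElts (Pi : Finset V) (M : Set V) : Set V :=
  {γ ∈ M | ∀ μ ∈ M, rootLE Pi γ μ → μ = γ}

/-- For any subset `M` of a combinatorial abelian ideal, both `min(M)` and `max(M)` are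
strongly orthogonal sets. -/
theorem stmt4 (R : RootSystemData V) (P Δa : Set V) (Pi : Finset V)
    (hP : IsPositiveSystem R P)
    (hPi : ∀ α ∈ P, rootLE Pi 0 α)
    (hI : IsCombinatorialAbelianIdeal R P Δa)
    (M : Set V) (hM : M ⊆ Δa) :
    (minimalElts Pi M).Pairwise (fun γ₁ γ₂ => γ₁ + γ₂ ∉ R.Δ ∧ γ₁ - γ₂ ∉ R.Δ) ∧
    (maximalElts Pi M).Pairwise (fun γ₁ γ₂ => γ₁ + γ₂ ∉ R.Δ ∧ γ₁ - γ₂ ∉ R.Δ) := by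
  obtain ⟨hPsub, htot, hnn, hadd⟩ := hP
  obtain ⟨hIsub, hideal, hab⟩ := hI
  have key : ∀ μ ν : V, ν - μ ∈ P → rootLE Pi μ ν := by
    intro μ ν h
    obtain ⟨c, hc⟩ := hPi _ h
    exact ⟨c, by simpa using hc⟩
  have diff : ∀ γ₁ ∈ M, ∀ γ₂ ∈ M,
      (∀ μ ∈ M, rootLE Pi μ γ₁ → μ = γ₁) → (∀ μ ∈ M, rootLE Pi μ γ₂ → μ = γ₂) →
      γ₁ ≠ γ₂ → γ₁ - γ₂ ∉ R.Δ := by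
    intro γ₁ h₁ γ₂ h₂ hmin₁ hmin₂ hne hd
    rcases htot _ hd with hp | hp
    · exact hne ((hmin₁ γ₂ h₂ (key _ _ hp)).symm)
    · exact hne (hmin₂ γ₁ h₁ (key _ _ (by simpa using hp)))
  have diff' : ∀ γ₁ ∈ M, ∀ γ₂ ∈ M,
      (∀ μ ∈ M, rootLE Pi γ₁ μ → μ = γ₁) → (∀ μ ∈ M, rootLE Pi γ₂ μ → μ = γ₂) →
      γ₁ ≠ γ₂ → γ₁ - γ₂ ∉ R.Δ := by
    intro γ₁ h₁ γ₂ h₂ hmax₁ hmax₂ hne hd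
    rcases htot _ hd with hp | hp
    · exact hne (hmax₂ γ₁ h₁ (key _ _ hp))
    · exact hne ((hmax₁ γ₂ h₂ (key _ _ (by simpa using hp))).symm)
  constructor
  · intro γ₁ h₁ γ₂ h₂ hne
    exact ⟨hab _ (hM h₁.1) _ (hM h₂.1), diff _ h₁.1 _ h₂.1 h₁.2 h₂.2 hne⟩
  · intro γ₁ h₁ γ₂ h₂ hne
    exact ⟨hab _ (hM h₁.1) _ (hM h₂.1), diff' _ h₁.1 _ h₂.1 h₁.2 h₂.2 hne⟩
end

section
/- In type C_n with long roots 2ε_i and short positive roots ε_i + ε_j (i < j), a subset S of Δ_𝔞 = {ε_i + ε_j : 1 ≤ i < j ≤ n} ∪ {2ε_i : 1 ≤ i ≤ n} is strongly orthogonal if and only if all indices occurring in the roots of S are pairwise distinct. Consequently the number c_{n,k} of strongly orthogonal k-subsets equals Σ_{t=0}^{min(k, n−k)} C(n−2t, k−t)·C(n,2t)·(2t)!/(t!·2^t). -/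
noncomputable section

/-- The standard dot product on `ℝⁿ`. -/
def dot {n : ℕ} (x y : Fin n → ℝ) : ℝ := ∑ i, x i * y i

/-- The standard basis vector `ε i` of `ℝⁿ`. -/
def eps {n : ℕ} (i : Fin n) : Fin n → ℝ := Pi.single i 1

/-!
Identify `Δ_𝔞` with `Sym2 (Fin n)` through `s(i, j) ↦ ε_i + ε_j`, so that the loop `s(i, i)` is
the long root `2ε_i`. Two such roots sharing an index `i` differ by a root `±(ε_j - ε_l)`. If
their supports are disjoint, their sum and difference have `ℓ¹`-norm `2 + 2 = 4`, whereas every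
root of `C_n` has `ℓ¹`-norm `2`; so neither is a root.

A strongly orthogonal `k`-set is therefore a family of pairwise disjoint elements of
`Sym2 (Fin n)`: a matching `M` with `t` edges together with `k - t` loops at vertices outside
the `2t` vertices of `M`. There are `C(n, 2t)` choices of these vertices, `(2t - 1)!!` perfect
matchings on them (sort by the partner of one vertex) and `C(n - 2t, k - t)` choices of loops;
finally `(2t)! = (2t - 1)!! · t! · 2^t`.
-/

namespace Nat

open scoped Nat

lemma factorial_two_mul_eq_doubleFactorial_mul (t : ℕ) :
    (2 * t)! = (2 * t - 1)‼ * (t ! * 2 ^ t) := by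
  cases t with
  | zero => rfl
  | succ t =>
    rw [show 2 * (t + 1) = 2 * t + 1 + 1 by ring, factorial_eq_mul_doubleFactorial,
      show 2 * t + 1 + 1 = 2 * (t + 1) by ring, doubleFactorial_two_mul,
      show 2 * (t + 1) - 1 = 2 * t + 1 by omega]
    ring

end Nat

namespace Sym2Finset

open Finset
open scoped Classical Nat

variable {α : Type*} [DecidableEq α]

def verts (P : Finset (Sym2 α)) : Finset α := P.biUnion Sym2.toFinset

def IsMatching (P : Finset (Sym2 α)) : Prop :=
  (∀ e ∈ P, ¬e.IsDiag) ∧ (P : Set (Sym2 α)).PairwiseDisjoint Sym2.toFinset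

lemma mem_verts {P : Finset (Sym2 α)} {v : α} : v ∈ verts P ↔ ∃ e ∈ P, v ∈ e := by
  simp [verts]

lemma verts_insert (e : Sym2 α) (P : Finset (Sym2 α)) :
    verts (insert e P) = e.toFinset ∪ verts P :=
  biUnion_insert

lemma card_verts {P : Finset (Sym2 α)} (hP : IsMatching P) : #(verts P) = 2 * #P := by
  rw [verts, card_biUnion hP.2,
    sum_const_nat fun e he => Sym2.card_toFinset_of_not_isDiag e (hP.1 e he), mul_comm]

lemma isMatching_insert {e : Sym2 α} {P : Finset (Sym2 α)} (he : e ∉ P) :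
    IsMatching (insert e P) ↔ ¬e.IsDiag ∧ Disjoint e.toFinset (verts P) ∧ IsMatching P := by
  simp only [IsMatching, forall_mem_insert, coe_insert, Set.pairwiseDisjoint_insert, verts,
    disjoint_biUnion_right]
  constructor
  · rintro ⟨⟨hd, hP⟩, hPd, hdisj⟩
    exact ⟨hd, fun f hf => hdisj f hf (ne_of_mem_of_not_mem hf he).symm, hP, hPd⟩
  · rintro ⟨hd, hdisj, hP, hPd⟩
    exact ⟨⟨hd, hP⟩, hPd, fun f hf _ => hdisj f hf⟩

def perfectMatchings (B : Finset α) : Finset (Finset (Sym2 α)) :=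
  {P ∈ B.sym2.powerset | IsMatching P ∧ verts P = B}

lemma mem_perfectMatchings {B : Finset α} {P : Finset (Sym2 α)} :
    P ∈ perfectMatchings B ↔ IsMatching P ∧ verts P = B := by
  refine ⟨fun h => (mem_filter.1 h).2, fun h => mem_filter.2 ⟨?_, h⟩⟩
  refine mem_powerset.2 fun e he => mem_sym2_iff.2 fun v hv => ?_
  exact h.2 ▸ mem_verts.2 ⟨e, he, hv⟩

lemma perfectMatchings_empty : perfectMatchings (∅ : Finset α) = {∅} := by
  ext P
  rw [mem_perfectMatchings, mem_singleton]
  refine ⟨fun ⟨hP, hv⟩ => ?_, fun h => ?_⟩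
  · have := card_verts hP
    rw [hv, card_empty] at this
    exact card_eq_zero.1 (by omega)
  · subst h
    exact ⟨⟨by simp, by simp⟩, by simp [verts]⟩

lemma insert_mem_perfectMatchings_iff {B : Finset α} {e : Sym2 α} {Q : Finset (Sym2 α)}
    (he : e ∉ Q) :
    insert e Q ∈ perfectMatchings B ↔
      ¬e.IsDiag ∧ e.toFinset ⊆ B ∧ Q ∈ perfectMatchings (B \ e.toFinset) := by
  simp only [mem_perfectMatchings, isMatching_insert he, verts_insert]
  constructor
  · rintro ⟨⟨hd, hdisj, hQ⟩, hB⟩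
    exact ⟨hd, hB ▸ subset_union_left, hQ, by rw [← hB, union_sdiff_cancel_left hdisj]⟩
  · rintro ⟨hd, hsub, hQ, hB⟩
    exact ⟨⟨hd, hB ▸ disjoint_sdiff, hQ⟩, by rw [hB, union_sdiff_of_subset hsub]⟩

lemma notMem_of_mem_perfectMatchings_sdiff {B : Finset α} {e f : Sym2 α}
    {Q : Finset (Sym2 α)} (hQ : Q ∈ perfectMatchings (B \ e.toFinset)) {a : α} (he : a ∈ e)
    (hf : a ∈ f) : f ∉ Q := fun hfQ => by
  have ha : a ∈ verts Q := mem_verts.2 ⟨f, hfQ, hf⟩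
  rw [(mem_perfectMatchings.1 hQ).2, mem_sdiff, Sym2.mem_toFinset] at ha
  exact ha.2 he

lemma perfectMatchings_eq_biUnion {B : Finset α} {a : α} (ha : a ∈ B) :
    perfectMatchings B = (B.erase a).biUnion fun b =>
      (perfectMatchings (B \ s(a, b).toFinset)).image (insert s(a, b)) := by
  ext P
  simp only [mem_biUnion, mem_image, mem_erase]
  constructor
  · intro hP
    obtain ⟨e, heP, hae⟩ := mem_verts.1 ((mem_perfectMatchings.1 hP).2 ▸ ha)
    obtain ⟨b, rfl⟩ := Sym2.mem_iff_exists.1 hae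
    rw [← insert_erase heP, insert_mem_perfectMatchings_iff (notMem_erase _ _)] at hP
    obtain ⟨hd, hsub, hQ⟩ := hP
    refine ⟨b, ⟨fun h => hd (h ▸ Sym2.mk_isDiag_iff.2 rfl), hsub (by simp)⟩, _, hQ,
      insert_erase heP⟩
  · rintro ⟨b, ⟨hba, hb⟩, Q, hQ, rfl⟩
    have hsub : s(a, b).toFinset ⊆ B := by
      simp [Sym2.toFinset_mk_eq, insert_subset_iff, ha, hb]
    rw [insert_mem_perfectMatchings_iff (notMem_of_mem_perfectMatchings_sdiff hQ
      (Sym2.mem_mk_left a b) (Sym2.mem_mk_left a b))]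
    exact ⟨fun h => hba (Sym2.mk_isDiag_iff.1 h).symm, hsub, hQ⟩

lemma card_perfectMatchings (t : ℕ) {B : Finset α} (hB : #B = 2 * t) :
    #(perfectMatchings B) = (2 * t - 1)‼ := by
  induction t generalizing B with
  | zero => simp [card_eq_zero.1 hB, perfectMatchings_empty]
  | succ t ih =>
    obtain ⟨a, ha⟩ := card_pos.1 (by omega : 0 < #B)
    have hpiece : ∀ b ∈ B.erase a,
        #((perfectMatchings (B \ s(a, b).toFinset)).image (insert s(a, b))) = (2 * t - 1)‼ := by
      intro b hb
      have hsub : s(a, b).toFinset ⊆ B := by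
        simp [Sym2.toFinset_mk_eq, insert_subset_iff, ha, mem_of_mem_erase hb]
      have hd : ¬s(a, b).IsDiag := fun h => ne_of_mem_erase hb (Sym2.mk_isDiag_iff.1 h).symm
      have hnotMem {Q} (hQ : Q ∈ perfectMatchings (B \ s(a, b).toFinset)) : s(a, b) ∉ Q :=
        notMem_of_mem_perfectMatchings_sdiff hQ (Sym2.mem_mk_left a b) (Sym2.mem_mk_left a b)
      rw [card_image_of_injOn fun Q hQ Q' hQ' h => by
        rw [← erase_insert (hnotMem hQ), h, erase_insert (hnotMem hQ')]]
      refine ih ?_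
      rw [card_sdiff_of_subset hsub, Sym2.card_toFinset_of_not_isDiag _ hd, hB]
      omega
    have hdisj : (B.erase a : Set α).PairwiseDisjoint fun b =>
        (perfectMatchings (B \ s(a, b).toFinset)).image (insert s(a, b)) := by
      intro b _ b' _ hbb'
      simp only [Function.onFun, disjoint_left, mem_image]
      rintro _ ⟨Q, -, rfl⟩ ⟨Q', hQ', h⟩
      have hmem : s(a, b) ∈ insert s(a, b') Q' := h ▸ mem_insert_self _ _
      rcases mem_insert.1 hmem with h' | h'
      · exact hbb' (Sym2.congr_right.1 h')
      · exact notMem_of_mem_perfectMatchings_sdiff hQ' (Sym2.mem_mk_left a b')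
          (Sym2.mem_mk_left a b) h'
    rw [perfectMatchings_eq_biUnion ha, card_biUnion hdisj, sum_congr rfl hpiece, sum_const,
      card_erase_of_mem ha, hB, smul_eq_mul, show 2 * (t + 1) - 1 = 2 * t + 1 by omega,
      Nat.doubleFactorial_add_one]

lemma toFinset_diag (v : α) : (Sym2.diag v).toFinset = {v} := by
  simp [Sym2.diag, Sym2.toFinset_mk_eq]

lemma pairwiseDisjoint_union_image_diag {M : Finset (Sym2 α)} (hM : IsMatching M)
    (L : Finset α) :
    (↑(M ∪ L.image Sym2.diag) : Set (Sym2 α)).PairwiseDisjoint Sym2.toFinset ↔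
      Disjoint L (verts M) := by
  have hdiag : (Sym2.diag '' (L : Set α)).PairwiseDisjoint Sym2.toFinset := by
    rintro _ ⟨v, -, rfl⟩ _ ⟨w, -, rfl⟩ hvw
    simpa [Function.onFun, toFinset_diag] using fun h : v = w => hvw (h ▸ rfl)
  rw [coe_union, coe_image, Set.pairwiseDisjoint_union]
  simp only [hM.2, hdiag, true_and, Set.forall_mem_image, Sym2.mem_toFinset, disjoint_left,
    mem_verts, not_exists, not_and, mem_coe, Sym2.diag, Sym2.mem_iff, or_self]
  exact ⟨fun h v hv e he hve => h he hv (fun h' => hM.1 e he (h' ▸ Sym2.diag_isDiag v)) hve rfl,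
    fun h e he v hv _ a hae hav => h (hav ▸ hv) e he (hav ▸ hae)⟩

variable [Fintype α]

lemma filter_isDiag_eq_image (F : Finset (Sym2 α)) :
    {e ∈ F | e.IsDiag} = ({v | Sym2.diag v ∈ F} : Finset α).image Sym2.diag := by
  ext e
  simp only [mem_filter, mem_image, mem_univ, true_and]
  refine ⟨fun ⟨he, hd⟩ => ⟨e.diagElem hd, ?_, Sym2.diag_diagElem hd⟩, ?_⟩
  · rwa [Sym2.diag_diagElem]
  · rintro ⟨v, hv, rfl⟩
    exact ⟨hv, Sym2.diag_isDiag v⟩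

variable (α) in
def matchings (t : ℕ) : Finset (Finset (Sym2 α)) := {P | IsMatching P ∧ #P = t}

variable (α) in
def disjointFamilies (k : ℕ) : Finset (Finset (Sym2 α)) :=
  {F | #F = k ∧ (F : Set (Sym2 α)).PairwiseDisjoint Sym2.toFinset}

lemma card_matchings (t : ℕ) :
    #(matchings α t) = (Fintype.card α).choose (2 * t) * (2 * t - 1)‼ := by
  have hunion : matchings α t =
      (powersetCard (2 * t) univ).biUnion perfectMatchings := by
    ext P
    simp only [matchings, mem_filter, mem_univ, true_and, mem_biUnion, mem_powersetCard_univ,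
      mem_perfectMatchings]
    constructor
    · rintro ⟨hP, rfl⟩
      exact ⟨verts P, card_verts hP, hP, rfl⟩
    · rintro ⟨B, hB, hP, rfl⟩
      exact ⟨hP, by have := card_verts hP; omega⟩
  have hdisj : (powersetCard (2 * t) (univ : Finset α) : Set (Finset α)).PairwiseDisjoint
      perfectMatchings := fun B _ B' _ h => disjoint_left.2 fun P hP hP' =>
    h ((mem_perfectMatchings.1 hP).2.symm.trans (mem_perfectMatchings.1 hP').2)
  rw [hunion, card_biUnion hdisj,
    sum_congr rfl fun B hB => card_perfectMatchings t (mem_powersetCard_univ.1 hB), sum_const,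
    card_powersetCard, card_univ, smul_eq_mul]

lemma card_disjointFamilies_filter_not_isDiag_eq {M : Finset (Sym2 α)} (hM : IsMatching M)
    {k : ℕ} (hk : #M ≤ k) :
    #{F ∈ disjointFamilies α k | F.filter (fun e => ¬e.IsDiag) = M} =
      (Fintype.card α - 2 * #M).choose (k - #M) := by
  have hdisj (L : Finset α) : Disjoint M (L.image Sym2.diag) := disjoint_left.2 fun e he he' => by
    obtain ⟨v, -, rfl⟩ := mem_image.1 he'
    exact hM.1 _ he (Sym2.diag_isDiag v)
  have hcard (L : Finset α) : #(M ∪ L.image Sym2.diag) = #M + #L := by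
    rw [card_union_of_disjoint (hdisj L), card_image_of_injective _ Sym2.diag_injective]
  have hnd (L : Finset α) : {e ∈ M ∪ L.image Sym2.diag | ¬e.IsDiag} = M := by
    rw [filter_union, filter_true_of_mem hM.1, filter_false_of_mem, union_empty]
    intro e he
    obtain ⟨v, -, rfl⟩ := mem_image.1 he
    exact not_not.2 (Sym2.diag_isDiag v)
  have hd (L : Finset α) : {e ∈ M ∪ L.image Sym2.diag | e.IsDiag} = L.image Sym2.diag := by
    rw [filter_union, filter_false_of_mem hM.1, empty_union, filter_true_of_mem]
    intro e he
    obtain ⟨v, -, rfl⟩ := mem_image.1 he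
    exact Sym2.diag_isDiag v
  have hfiber : {F ∈ disjointFamilies α k | F.filter (fun e => ¬e.IsDiag) = M} =
      ((verts M)ᶜ.powersetCard (k - #M)).image fun L => M ∪ L.image Sym2.diag := by
    ext F
    simp only [disjointFamilies, mem_filter, mem_univ, true_and, mem_image, mem_powersetCard,
      subset_compl_iff_disjoint_right]
    constructor
    · rintro ⟨⟨hFk, hF⟩, rfl⟩
      have hFL := filter_union_filter_not_eq (fun e : Sym2 α => e.IsDiag) F
      rw [filter_isDiag_eq_image, union_comm] at hFL
      rw [← hFL, pairwiseDisjoint_union_image_diag hM] at hF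
      rw [← hFL, hcard] at hFk
      exact ⟨_, ⟨hF, by omega⟩, hFL⟩
    · rintro ⟨L, ⟨hL, hLcard⟩, rfl⟩
      exact ⟨⟨by rw [hcard]; omega, (pairwiseDisjoint_union_image_diag hM L).2 hL⟩, hnd L⟩
  rw [hfiber, card_image_of_injOn fun L _ L' _ h =>
      image_injective Sym2.diag_injective (by rw [← hd L, h, hd L']),
    card_powersetCard, card_compl, card_verts hM]

lemma card_disjointFamilies (k : ℕ) :
    #(disjointFamilies α k) =
      ∑ t ∈ range (k + 1), (Fintype.card α).choose (2 * t) * (2 * t - 1)‼ *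
        (Fintype.card α - 2 * t).choose (k - t) := by
  have hmaps : ∀ F ∈ disjointFamilies α k,
      {e ∈ F | ¬e.IsDiag} ∈ ({M | IsMatching M ∧ #M ≤ k} : Finset (Finset (Sym2 α))) := by
    intro F hF
    simp only [disjointFamilies, mem_filter, mem_univ, true_and] at hF ⊢
    exact ⟨⟨fun e he => (mem_filter.1 he).2, hF.2.subset (filter_subset _ F)⟩,
      hF.1 ▸ card_filter_le F _⟩
  have hcard : ∀ M ∈ ({M | IsMatching M ∧ #M ≤ k} : Finset (Finset (Sym2 α))),
      #M ∈ range (k + 1) := fun M hM => mem_range_succ_iff.2 (mem_filter.1 hM).2.2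
  rw [card_eq_sum_card_fiberwise hmaps, ← sum_fiberwise_of_maps_to hcard]
  refine sum_congr rfl fun t ht => ?_
  have ht : t ≤ k := mem_range_succ_iff.1 ht
  have hmatch : {M ∈ ({M | IsMatching M ∧ #M ≤ k} : Finset (Finset (Sym2 α))) | #M = t} =
      matchings α t := by
    ext M
    simp only [matchings, mem_filter, mem_univ, true_and]
    exact ⟨fun ⟨⟨hM, _⟩, hMt⟩ => ⟨hM, hMt⟩,
      fun ⟨hM, hMt⟩ => ⟨⟨hM, hMt ▸ ht⟩, hMt⟩⟩
  rw [hmatch, ← card_matchings, ← smul_eq_mul, ← sum_const]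
  refine sum_congr rfl fun M hM => ?_
  obtain ⟨hMm, rfl⟩ := (mem_filter.1 hM).2
  exact card_disjointFamilies_filter_not_isDiag_eq hMm ht

end Sym2Finset

namespace TypeC

open Finset
open scoped Classical Nat

variable {n : ℕ}

lemma eps_apply (i j : Fin n) : eps i j = if j = i then 1 else 0 := Pi.single_apply i 1 j

lemma sum_abs_eps (i : Fin n) : ∑ j, |eps i j| = 1 := by
  simp [eps_apply, apply_ite]

lemma sum_abs_add_of_disjoint {ι : Type*} [Fintype ι] {x y : ι → ℝ}
    (h : ∀ i, x i = 0 ∨ y i = 0) : ∑ i, |(x + y) i| = ∑ i, |x i| + ∑ i, |y i| := by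
  rw [← sum_add_distrib]
  refine sum_congr rfl fun i _ => ?_
  rcases h i with h | h <;> simp [h]

lemma sum_abs_smul_eps_add_smul_eps {i j : Fin n} (hij : i ≠ j) {a b : ℝ} (ha : |a| = 1)
    (hb : |b| = 1) : ∑ k, |(a • eps i + b • eps j) k| = 2 := by
  rw [sum_abs_add_of_disjoint fun k => ?_]
  · simp only [Pi.smul_apply, smul_eq_mul, abs_mul, ha, hb, one_mul, sum_abs_eps]
    norm_num
  · by_cases hk : k = i
    · subst hk; simp [eps_apply, hij]
    · simp [eps_apply, hk]

def rootsC (n : ℕ) : Set (Fin n → ℝ) :=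
  {v | (∃ i j : Fin n, i ≠ j ∧
        (v = eps i + eps j ∨ v = eps i - eps j ∨ v = -eps i - eps j)) ∨
      ∃ i : Fin n, v = (2 : ℝ) • eps i ∨ v = -((2 : ℝ) • eps i)}

lemma sum_abs_of_mem_rootsC {v : Fin n → ℝ} (hv : v ∈ rootsC n) : ∑ k, |v k| = 2 := by
  rcases hv with ⟨i, j, hij, rfl | rfl | rfl⟩ | ⟨i, rfl | rfl⟩
  · simpa using sum_abs_smul_eps_add_smul_eps hij (a := 1) (b := 1) (by simp) (by simp)
  · simpa [sub_eq_add_neg] using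
      sum_abs_smul_eps_add_smul_eps hij (a := 1) (b := -1) (by simp) (by simp)
  · simpa [sub_eq_add_neg] using
      sum_abs_smul_eps_add_smul_eps hij (a := -1) (b := -1) (by simp) (by simp)
  all_goals simp [abs_mul, ← mul_sum, sum_abs_eps]

def rootOf : Sym2 (Fin n) → Fin n → ℝ :=
  Sym2.lift ⟨fun i j => eps i + eps j, fun _ _ => add_comm _ _⟩

@[simp]
lemma rootOf_mk (i j : Fin n) : rootOf s(i, j) = eps i + eps j := rfl

lemma rootOf_apply_ne_zero_iff (e : Sym2 (Fin n)) (k : Fin n) : rootOf e k ≠ 0 ↔ k ∈ e := by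
  induction e using Sym2.inductionOn with
  | hf i j =>
    simp only [rootOf_mk, Pi.add_apply, eps_apply, Sym2.mem_iff]
    split_ifs <;> simp_all

lemma rootOf_injective : Function.Injective (rootOf (n := n)) := fun e f h =>
  Sym2.ext fun k => by rw [← rootOf_apply_ne_zero_iff, ← rootOf_apply_ne_zero_iff, h]

lemma range_rootOf : Set.range (rootOf (n := n)) =
    {v | (∃ i j : Fin n, i < j ∧ v = eps i + eps j) ∨
      ∃ i : Fin n, v = (2 : ℝ) • eps i} := by
  ext v
  constructor
  · rintro ⟨e, rfl⟩
    induction e using Sym2.inductionOn with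
    | hf i j =>
      rcases lt_trichotomy i j with h | rfl | h
      · exact Or.inl ⟨i, j, h, rfl⟩
      · exact Or.inr ⟨i, (two_smul ℝ _).symm⟩
      · exact Or.inl ⟨j, i, h, add_comm _ _⟩
  · rintro (⟨i, j, -, rfl⟩ | ⟨i, rfl⟩)
    · exact ⟨s(i, j), rfl⟩
    · exact ⟨s(i, i), (two_smul ℝ _).symm⟩

lemma rootOf_mem_rootsC (e : Sym2 (Fin n)) : rootOf e ∈ rootsC n := by
  induction e using Sym2.inductionOn with
  | hf i j =>
    by_cases hij : i = j
    · exact Or.inr ⟨i, Or.inl (by rw [hij, rootOf_mk, two_smul])⟩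
    · exact Or.inl ⟨i, j, hij, Or.inl rfl⟩

lemma rootOf_sub_rootOf_mem_rootsC {e f : Sym2 (Fin n)} (hef : e ≠ f) {i : Fin n}
    (he : i ∈ e) (hf : i ∈ f) : rootOf e - rootOf f ∈ rootsC n := by
  obtain ⟨j, rfl⟩ := Sym2.mem_iff_exists.1 he
  obtain ⟨l, rfl⟩ := Sym2.mem_iff_exists.1 hf
  refine Or.inl ⟨j, l, fun h => hef (h ▸ rfl), Or.inr (Or.inl ?_)⟩
  simp only [rootOf_mk]
  abel

lemma disjoint_support_rootOf_iff (e f : Sym2 (Fin n)) :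
    (∀ i, ¬(rootOf e i ≠ 0 ∧ rootOf f i ≠ 0)) ↔ Disjoint e.toFinset f.toFinset := by
  simp only [rootOf_apply_ne_zero_iff, disjoint_left, Sym2.mem_toFinset, not_and]

lemma stronglyOrthogonal_rootOf_iff {e f : Sym2 (Fin n)} (hef : e ≠ f) :
    (rootOf e + rootOf f ∉ rootsC n ∧ rootOf e - rootOf f ∉ rootsC n) ↔
      Disjoint e.toFinset f.toFinset := by
  refine ⟨fun h => ?_, fun h => ?_⟩
  · rw [← disjoint_support_rootOf_iff]
    exact fun i hi => h.2 (rootOf_sub_rootOf_mem_rootsC hef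
      ((rootOf_apply_ne_zero_iff _ _).1 hi.1) ((rootOf_apply_ne_zero_iff _ _).1 hi.2))
  · have hsupp : ∀ i, rootOf e i = 0 ∨ rootOf f i = 0 := fun i => by
      have := (disjoint_support_rootOf_iff e f).2 h i
      tauto
    have hsum := sum_abs_add_of_disjoint hsupp
    have hdiff := sum_abs_add_of_disjoint (y := -rootOf f) (by simpa using hsupp)
    simp only [Pi.neg_apply, abs_neg, ← sub_eq_add_neg] at hdiff
    rw [sum_abs_of_mem_rootsC (rootOf_mem_rootsC e),
      sum_abs_of_mem_rootsC (rootOf_mem_rootsC f)] at hsum hdiff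
    exact ⟨fun hr => by linarith [sum_abs_of_mem_rootsC hr],
      fun hr => by linarith [sum_abs_of_mem_rootsC hr]⟩

lemma pairwise_stronglyOrthogonal_image_iff (T : Set (Sym2 (Fin n))) :
    (rootOf '' T).Pairwise (fun x y => x + y ∉ rootsC n ∧ x - y ∉ rootsC n) ↔
      T.PairwiseDisjoint Sym2.toFinset := by
  rw [rootOf_injective.injOn.pairwise_image]
  exact ⟨fun h e he f hf hef => (stronglyOrthogonal_rootOf_iff hef).1 (h he hf hef),
    fun h e he f hf hef => (stronglyOrthogonal_rootOf_iff hef).2 (h he hf hef)⟩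

lemma pairwise_disjoint_support_image_iff (T : Set (Sym2 (Fin n))) :
    (rootOf '' T).Pairwise (fun x y => ∀ i, ¬(x i ≠ 0 ∧ y i ≠ 0)) ↔
      T.PairwiseDisjoint Sym2.toFinset := by
  rw [rootOf_injective.injOn.pairwise_image]
  exact ⟨fun h e he f hf hef => (disjoint_support_rootOf_iff e f).1 (h he hf hef),
    fun h e he f hf hef => (disjoint_support_rootOf_iff e f).2 (h he hf hef)⟩

lemma sum_choose_mul_doubleFactorial (n k : ℕ) :
    ∑ t ∈ range (k + 1), n.choose (2 * t) * (2 * t - 1)‼ * (n - 2 * t).choose (k - t) =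
      ∑ t ∈ range (min k (n - k) + 1),
        (n - 2 * t).choose (k - t) * (n.choose (2 * t) * (2 * t)! / (t ! * 2 ^ t)) := by
  have hterm (t : ℕ) :
      (n - 2 * t).choose (k - t) * (n.choose (2 * t) * (2 * t)! / (t ! * 2 ^ t)) =
        n.choose (2 * t) * (2 * t - 1)‼ * (n - 2 * t).choose (k - t) := by
    rw [Nat.factorial_two_mul_eq_doubleFactorial_mul, ← mul_assoc,
      Nat.mul_div_cancel _ (by positivity), mul_comm]
  simp only [hterm]
  symm
  refine sum_subset (fun t ht => ?_) fun t ht hnot => ?_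
  · rw [mem_range] at ht ⊢
    omega
  · rw [mem_range] at ht hnot
    rcases le_or_gt (2 * t) n with h | h
    · rw [Nat.choose_eq_zero_of_lt (by omega : n - 2 * t < k - t), mul_zero]
    · rw [Nat.choose_eq_zero_of_lt h, zero_mul, zero_mul]

lemma image_disjointFamilies (k : ℕ) :
    (fun F : Finset (Sym2 (Fin n)) => rootOf '' ↑F) ''
        ↑(Sym2Finset.disjointFamilies (Fin n) k) =
      {S : Set (Fin n → ℝ) | S ⊆ Set.range rootOf ∧ S.ncard = k ∧
        S.Pairwise (fun x y => x + y ∉ rootsC n ∧ x - y ∉ rootsC n)} := by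
  ext S
  simp only [Sym2Finset.disjointFamilies, Set.mem_ofPred_eq, Set.mem_image, coe_filter,
    mem_univ, true_and, Set.subset_range_iff_exists_image_eq]
  constructor
  · rintro ⟨F, ⟨hk, hF⟩, rfl⟩
    refine ⟨⟨F, rfl⟩, ?_, (pairwise_stronglyOrthogonal_image_iff _).2 hF⟩
    rw [Set.ncard_image_of_injective _ rootOf_injective, Set.ncard_coe_finset, hk]
  · rintro ⟨⟨T, rfl⟩, hk, hT⟩
    refine ⟨(Set.toFinite T).toFinset, ?_, by rw [Set.Finite.coe_toFinset]⟩
    rw [← Set.ncard_coe_finset, Set.Finite.coe_toFinset,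
      ← pairwise_stronglyOrthogonal_image_iff, ← hk,
      Set.ncard_image_of_injective _ rootOf_injective]
    exact ⟨rfl, hT⟩

lemma ncard_stronglyOrthogonal (k : ℕ) :
    Set.ncard {S : Set (Fin n → ℝ) | S ⊆ Set.range rootOf ∧ S.ncard = k ∧
        S.Pairwise (fun x y => x + y ∉ rootsC n ∧ x - y ∉ rootsC n)} =
      #(Sym2Finset.disjointFamilies (Fin n) k) := by
  rw [← image_disjointFamilies, Set.ncard_image_of_injective _
    fun F G h => coe_injective (Set.image_injective.2 rootOf_injective h), Set.ncard_coe_finset]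

end TypeC

/-- In type `C_n`, for the maximal abelian ideal
`Δ_𝔞 = {ε_i + ε_j : i < j} ∪ {2ε_i}`: a subset is strongly orthogonal (sums and differences
of distinct members are not roots of `C_n`) iff all indices occurring in its roots
(i.e. the supports) are pairwise disjoint, and the number `c_{n,k}` of strongly orthogonal
`k`-subsets equals `Σ_t C(n-2t, k-t)·C(n,2t)·(2t)!/(t!·2^t)`. -/
theorem stmt8 (n : ℕ) (ΔC Δa : Set (Fin n → ℝ))
    (hΔC : ΔC = {v | (∃ i j : Fin n, i ≠ j ∧
        (v = eps i + eps j ∨ v = eps i - eps j ∨ v = -eps i - eps j)) ∨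
      ∃ i : Fin n, v = (2 : ℝ) • eps i ∨ v = -((2 : ℝ) • eps i)})
    (hΔa : Δa = {v | (∃ i j : Fin n, i < j ∧ v = eps i + eps j) ∨
      ∃ i : Fin n, v = (2 : ℝ) • eps i}) :
    (∀ S : Set (Fin n → ℝ), S ⊆ Δa →
      (S.Pairwise (fun x y => x + y ∉ ΔC ∧ x - y ∉ ΔC) ↔
        ∀ x ∈ S, ∀ y ∈ S, x ≠ y → ∀ i : Fin n, ¬(x i ≠ 0 ∧ y i ≠ 0))) ∧
    (∀ k : ℕ,
      Set.ncard {S : Set (Fin n → ℝ) | S ⊆ Δa ∧ S.ncard = k ∧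
          S.Pairwise (fun x y => x + y ∉ ΔC ∧ x - y ∉ ΔC)} =
        ∑ t ∈ Finset.range (min k (n - k) + 1),
          Nat.choose (n - 2 * t) (k - t) *
            (Nat.choose n (2 * t) * Nat.factorial (2 * t) /
              (Nat.factorial t * 2 ^ t))) := by
  obtain rfl : ΔC = TypeC.rootsC n := hΔC
  obtain rfl : Δa = Set.range TypeC.rootOf := hΔa.trans TypeC.range_rootOf.symm
  refine ⟨fun S hS => ?_, fun k => ?_⟩
  · obtain ⟨T, rfl⟩ := Set.subset_range_iff_exists_image_eq.1 hS
    exact (TypeC.pairwise_stronglyOrthogonal_image_iff T).trans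
      (TypeC.pairwise_disjoint_support_image_iff T).symm
  · rw [TypeC.ncard_stronglyOrthogonal, Sym2Finset.card_disjointFamilies, Fintype.card_fin,
      TypeC.sum_choose_mul_doubleFactorial]
end
end

section
/- The numbers c_{n,k} = Σ_{t} C(n−2t, k−t)·C(n,2t)·(2t)!/(t!·2^t) satisfy the symmetry c_{n,k} = c_{n,n−k} for all 0 ≤ k ≤ n. -/
/-- `c n k`: the number of strongly orthogonal `k`-subsets of the maximal abelian ideal in
type `C_n`, given by `Σ_{t=0}^{min(k,n-k)} C(n-2t, k-t)·C(n,2t)·(2t)!/(t!·2^t)`. -/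
def c (n k : ℕ) : ℕ :=
  ∑ t ∈ Finset.range (min k (n - k) + 1),
    Nat.choose (n - 2 * t) (k - t) *
      (Nat.choose n (2 * t) * Nat.factorial (2 * t) / (Nat.factorial t * 2 ^ t))

/-- The symmetry `c_{n,k} = c_{n,n-k}` for `0 ≤ k ≤ n`. -/
theorem stmt9 (n k : ℕ) (hk : k ≤ n) : c n k = c n (n - k) := by
  unfold c
  rw [Nat.sub_sub_self hk, Nat.min_comm]
  apply Finset.sum_congr rfl
  intro t ht
  simp only [Finset.mem_range, Nat.lt_succ_iff] at ht
  have h2 : k - t ≤ n - 2 * t := by omega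
  have h3 : n - 2 * t - (k - t) = n - k - t := by omega
  rw [← Nat.choose_symm h2, h3]
end

section
/- In type B_n (roots ±ε_i ± ε_j, ±ε_i) with the abelian nilradical Δ_{𝔭^u} = {ε_1−ε_2, …, ε_1−ε_n, ε_1, ε_1+ε_n, …, ε_1+ε_2} of cardinality 2n−1, the strongly orthogonal subsets are exactly: the empty set, the 2n−1 singletons, and the n−1 pairs {ε_1−ε_j, ε_1+ε_j} for 2 ≤ j ≤ n. Hence their total number is 3n−1. -/
noncomputable section

lemma eps_apply {n : ℕ} (i k : Fin n) : eps i k = if k = i then 1 else 0 :=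
  Pi.single_apply i 1 k

lemma eps_self {n : ℕ} (i : Fin n) : eps i i = 1 := by simp [eps_apply]

lemma eps_ne {n : ℕ} {i k : Fin n} (h : k ≠ i) : eps i k = 0 := by simp [eps_apply, h]

lemma eps_inj {n : ℕ} {i k : Fin n} (h : eps i = eps k) : i = k := by
  by_contra hik
  have h1 := congrFun h i
  rw [eps_self] at h1
  rw [eps_ne hik] at h1
  norm_num at h1

lemma memB_coord {n : ℕ} (v : Fin n → ℝ)
    (hv : (∃ i j : Fin n, i ≠ j ∧
        (v = eps i - eps j ∨ v = eps i + eps j ∨ v = -eps i - eps j)) ∨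
      ∃ i : Fin n, v = eps i ∨ v = -eps i) (k : Fin n) :
    v k = -1 ∨ v k = 0 ∨ v k = 1 := by
  rcases hv with ⟨i, j, hij, h | h | h⟩ | ⟨i, h | h⟩ <;> subst h <;>
    simp [eps_apply] <;> split_ifs <;> simp_all

lemma sub_ne_add {n : ℕ} (z j k : Fin n) : eps z - eps j ≠ eps z + eps k := by
  intro h
  have h1 := congrFun h k
  simp only [Pi.sub_apply, Pi.add_apply, eps_self] at h1
  rw [eps_apply j k] at h1
  split_ifs at h1 <;> linarith

lemma eps_ne_sub {n : ℕ} (z j : Fin n) : eps z ≠ eps z - eps j := by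
  intro h
  have h1 := congrFun h j
  simp only [Pi.sub_apply, eps_self] at h1
  linarith

lemma eps_ne_add {n : ℕ} (z j : Fin n) : eps z ≠ eps z + eps j := by
  intro h
  have h1 := congrFun h j
  simp only [Pi.add_apply, eps_self] at h1
  linarith

lemma sub_inj {n : ℕ} {z j k : Fin n} (h : eps z - eps j = eps z - eps k) : j = k := by
  rw [sub_right_inj] at h; exact eps_inj h

lemma add_inj {n : ℕ} {z j k : Fin n} (h : eps z + eps j = eps z + eps k) : j = k := by
  rw [add_right_inj] at h; exact eps_inj h
theorem aux (n : ℕ) (hn : 2 ≤ n) (z : Fin n) (ΔB Δp : Set (Fin n → ℝ))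
    (hΔB : ΔB = {v | (∃ i j : Fin n, i ≠ j ∧
        (v = eps i - eps j ∨ v = eps i + eps j ∨ v = -eps i - eps j)) ∨
      ∃ i : Fin n, v = eps i ∨ v = -eps i})
    (hΔp : Δp = {v | ∃ j : Fin n, j ≠ z ∧
        (v = eps z - eps j ∨ v = eps z + eps j)} ∪ {eps z}) :
    (∀ S : Set (Fin n → ℝ), S ⊆ Δp →
      (S.Pairwise (fun x y => x + y ∉ ΔB ∧ x - y ∉ ΔB) ↔
        S = ∅ ∨ (∃ v ∈ Δp, S = {v}) ∨
          ∃ j : Fin n, j ≠ z ∧ S = {eps z - eps j, eps z + eps j})) ∧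
    Set.ncard {S : Set (Fin n → ℝ) | S ⊆ Δp ∧
      S.Pairwise (fun x y => x + y ∉ ΔB ∧ x - y ∉ ΔB)} = 3 * n - 1 := by
  have hBmem : ∀ v : Fin n → ℝ, v ∈ ΔB ↔ ((∃ i j : Fin n, i ≠ j ∧
        (v = eps i - eps j ∨ v = eps i + eps j ∨ v = -eps i - eps j)) ∨
      ∃ i : Fin n, v = eps i ∨ v = -eps i) := fun v => by rw [hΔB]; rfl
  have hpmem : ∀ v : Fin n → ℝ, v ∈ Δp ↔
      ((∃ j : Fin n, j ≠ z ∧ (v = eps z - eps j ∨ v = eps z + eps j)) ∨ v = eps z) :=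
    fun v => by rw [hΔp]; simp only [Set.mem_union, Set.mem_setOf_eq, Set.mem_singleton_iff]
  have valz : ∀ v ∈ Δp, v z = 1 := by
    intro v hv
    rcases (hpmem v).1 hv with ⟨j, hj, h | h⟩ | h
    · subst h; simp [Pi.sub_apply, eps_self, eps_ne (Ne.symm hj)]
    · subst h; simp [Pi.add_apply, eps_self, eps_ne (Ne.symm hj)]
    · subst h; simp [eps_self]
  have sum_not : ∀ x ∈ Δp, ∀ y ∈ Δp, x + y ∉ ΔB := by
    intro x hx y hy hmem
    have h1 := memB_coord _ ((hBmem _).1 hmem) z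
    rw [Pi.add_apply, valz x hx, valz y hy] at h1
    norm_num at h1
  have key : ∀ x ∈ Δp, ∀ y ∈ Δp, x ≠ y →
      ((x + y ∉ ΔB ∧ x - y ∉ ΔB) ↔
        ∃ j : Fin n, j ≠ z ∧ ((x = eps z - eps j ∧ y = eps z + eps j) ∨
          (x = eps z + eps j ∧ y = eps z - eps j))) := by
    intro x hx y hy hxy
    constructor
    · rintro ⟨-, hdiff⟩
      rcases (hpmem x).1 hx with ⟨j, hj, hx1 | hx1⟩ | hx1
      · rcases (hpmem y).1 hy with ⟨k, hk, hy1 | hy1⟩ | hy1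
        · by_cases hjk : j = k
          · exact absurd (hx1.trans (hjk ▸ hy1.symm)) hxy
          · exact absurd ((hBmem _).2 (Or.inl ⟨k, j, fun h => hjk h.symm,
              Or.inl (by rw [hx1, hy1]; abel)⟩)) hdiff
        · by_cases hjk : j = k
          · exact ⟨j, hj, Or.inl ⟨hx1, hjk ▸ hy1⟩⟩
          · exact absurd ((hBmem _).2 (Or.inl ⟨j, k, hjk,
              Or.inr (Or.inr (by rw [hx1, hy1]; abel))⟩)) hdiff
        · exact absurd ((hBmem _).2 (Or.inr ⟨j,
            Or.inr (by rw [hx1, hy1]; abel)⟩)) hdiff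
      · rcases (hpmem y).1 hy with ⟨k, hk, hy1 | hy1⟩ | hy1
        · by_cases hjk : j = k
          · exact ⟨j, hj, Or.inr ⟨hx1, hjk ▸ hy1⟩⟩
          · exact absurd ((hBmem _).2 (Or.inl ⟨j, k, hjk,
              Or.inr (Or.inl (by rw [hx1, hy1]; abel))⟩)) hdiff
        · by_cases hjk : j = k
          · exact absurd (hx1.trans (hjk ▸ hy1.symm)) hxy
          · exact absurd ((hBmem _).2 (Or.inl ⟨j, k, hjk,
              Or.inl (by rw [hx1, hy1]; abel)⟩)) hdiff
        · exact absurd ((hBmem _).2 (Or.inr ⟨j,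
            Or.inl (by rw [hx1, hy1]; abel)⟩)) hdiff
      · rcases (hpmem y).1 hy with ⟨k, hk, hy1 | hy1⟩ | hy1
        · exact absurd ((hBmem _).2 (Or.inr ⟨k,
            Or.inl (by rw [hx1, hy1]; abel)⟩)) hdiff
        · exact absurd ((hBmem _).2 (Or.inr ⟨k,
            Or.inr (by rw [hx1, hy1]; abel)⟩)) hdiff
        · exact absurd (hx1.trans hy1.symm) hxy
    · rintro ⟨j, hj, ⟨hx1, hy1⟩ | ⟨hx1, hy1⟩⟩
      · refine ⟨sum_not x hx y hy, fun hmem => ?_⟩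
        have h1 := memB_coord _ ((hBmem _).1 hmem) j
        rw [hx1, hy1] at h1
        simp only [Pi.sub_apply, Pi.add_apply, eps_self, eps_ne hj] at h1
        norm_num at h1
      · refine ⟨sum_not x hx y hy, fun hmem => ?_⟩
        have h1 := memB_coord _ ((hBmem _).1 hmem) j
        rw [hx1, hy1] at h1
        simp only [Pi.sub_apply, Pi.add_apply, eps_self, eps_ne hj] at h1
        norm_num at h1
  have part1 : ∀ S : Set (Fin n → ℝ), S ⊆ Δp →
      (S.Pairwise (fun x y => x + y ∉ ΔB ∧ x - y ∉ ΔB) ↔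
        S = ∅ ∨ (∃ v ∈ Δp, S = {v}) ∨
          ∃ j : Fin n, j ≠ z ∧ S = {eps z - eps j, eps z + eps j}) := by
    intro S hS
    constructor
    · intro hP
      rcases Set.eq_empty_or_nonempty S with h | ⟨v, hv⟩
      · exact Or.inl h
      by_cases hw : ∃ w ∈ S, w ≠ v
      · rcases hw with ⟨w, hwS, hwv⟩
        obtain ⟨j, hj, hcase⟩ :=
          (key v (hS hv) w (hS hwS) (Ne.symm hwv)).1 (hP hv hwS (Ne.symm hwv))
        refine Or.inr (Or.inr ⟨j, hj, ?_⟩)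
        apply Set.Subset.antisymm
        · intro u huS
          by_cases huv : u = v
          · subst huv
            rcases hcase with ⟨h1, _⟩ | ⟨h1, _⟩
            · exact Or.inl h1
            · exact Or.inr h1
          by_cases huw : u = w
          · subst huw
            rcases hcase with ⟨_, h2⟩ | ⟨_, h2⟩
            · exact Or.inr h2
            · exact Or.inl h2
          obtain ⟨k, hk, hcase2⟩ :=
            (key u (hS huS) v (hS hv) huv).1 (hP huS hv huv)
          exfalso
          rcases hcase2 with ⟨hu1, hv1⟩ | ⟨hu1, hv1⟩
          · rcases hcase with ⟨hv2, hw2⟩ | ⟨hv2, hw2⟩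
            · exact sub_ne_add z j k (hv2.symm.trans hv1)
            · have hjk : j = k := add_inj (hv2.symm.trans hv1)
              exact huw (by rw [hu1, hw2, hjk])
          · rcases hcase with ⟨hv2, hw2⟩ | ⟨hv2, hw2⟩
            · have hjk : j = k := sub_inj (hv2.symm.trans hv1)
              exact huw (by rw [hu1, hw2, hjk])
            · exact sub_ne_add z k j (hv1.symm.trans hv2)
        · intro u hu
          rcases hu with rfl | hu
          · rcases hcase with ⟨h1, _⟩ | ⟨_, h2⟩
            · exact h1 ▸ hv
            · exact h2 ▸ hwS
          · rw [Set.mem_singleton_iff] at hu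
            subst hu
            rcases hcase with ⟨_, h2⟩ | ⟨h1, _⟩
            · exact h2 ▸ hwS
            · exact h1 ▸ hv
      · push_neg at hw
        refine Or.inr (Or.inl ⟨v, hS hv, ?_⟩)
        ext u
        simp only [Set.mem_singleton_iff]
        exact ⟨fun hu => hw u hu, fun h => h ▸ hv⟩
    · rintro (rfl | ⟨v, hv, rfl⟩ | ⟨j, hj, rfl⟩)
      · exact Set.pairwise_empty _
      · exact Set.pairwise_singleton _ _
      · have h1 : eps z - eps j ∈ Δp := (hpmem _).2 (Or.inl ⟨j, hj, Or.inl rfl⟩)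
        have h2 : eps z + eps j ∈ Δp := (hpmem _).2 (Or.inl ⟨j, hj, Or.inr rfl⟩)
        intro x hx y hy hxy
        rcases hx with rfl | hx
        · rcases hy with rfl | hy
          · exact absurd rfl hxy
          · rw [Set.mem_singleton_iff] at hy
            subst hy
            exact (key _ h1 _ h2 hxy).2 ⟨j, hj, Or.inl ⟨rfl, rfl⟩⟩
        · rw [Set.mem_singleton_iff] at hx
          subst hx
          rcases hy with rfl | hy
          · exact (key _ h2 _ h1 hxy).2 ⟨j, hj, Or.inr ⟨rfl, rfl⟩⟩
          · rw [Set.mem_singleton_iff] at hy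
            subst hy
            exact absurd rfl hxy
  refine ⟨part1, ?_⟩
  have hfinJ : ({j : Fin n | j ≠ z}).Finite := Set.toFinite _
  have hcardJ : ({j : Fin n | j ≠ z}).ncard = n - 1 := by
    have he : {j : Fin n | j ≠ z} = Set.univ \ {z} := by
      ext j; simp
    rw [he, Set.ncard_diff (Set.subset_univ _), Set.ncard_univ, Set.ncard_singleton,
      Nat.card_eq_fintype_card, Fintype.card_fin]
  have hΔpeq : Δp = (fun j => eps z - eps j) '' {j : Fin n | j ≠ z} ∪
      ((fun j => eps z + eps j) '' {j : Fin n | j ≠ z} ∪ {eps z}) := by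
    rw [hΔp]
    ext v
    simp only [Set.mem_union, Set.mem_setOf_eq, Set.mem_image, Set.mem_singleton_iff]
    constructor
    · rintro (⟨j, hj, h | h⟩ | h)
      · exact Or.inl ⟨j, hj, h.symm⟩
      · exact Or.inr (Or.inl ⟨j, hj, h.symm⟩)
      · exact Or.inr (Or.inr h)
    · rintro (⟨j, hj, rfl⟩ | ⟨j, hj, rfl⟩ | rfl)
      · exact Or.inl ⟨j, hj, Or.inl rfl⟩
      · exact Or.inl ⟨j, hj, Or.inr rfl⟩
      · exact Or.inr rfl
  have hfin1 : ((fun j => eps z - eps j) '' {j : Fin n | j ≠ z}).Finite := hfinJ.image _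
  have hfin2 : ((fun j => eps z + eps j) '' {j : Fin n | j ≠ z}).Finite := hfinJ.image _
  have hfin3 : ({eps z} : Set (Fin n → ℝ)).Finite := Set.finite_singleton _
  have hfinp : Δp.Finite := by
    rw [hΔpeq]; exact hfin1.union (hfin2.union hfin3)
  have hcardp : Δp.ncard = 2 * n - 1 := by
    have hd1 : Disjoint ((fun j => eps z - eps j) '' {j : Fin n | j ≠ z})
        ((fun j => eps z + eps j) '' {j : Fin n | j ≠ z} ∪ {eps z}) := by
      rw [Set.disjoint_left]
      rintro a ⟨j, hj, rfl⟩ (⟨k, hk, hik⟩ | hik)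
      · exact sub_ne_add z j k hik.symm
      · rw [Set.mem_singleton_iff] at hik
        exact eps_ne_sub z j hik.symm
    have hd2 : Disjoint ((fun j => eps z + eps j) '' {j : Fin n | j ≠ z})
        ({eps z} : Set (Fin n → ℝ)) := by
      rw [Set.disjoint_left]
      rintro a ⟨j, hj, rfl⟩ hik
      rw [Set.mem_singleton_iff] at hik
      exact eps_ne_add z j hik.symm
    have hi1 : Set.InjOn (fun j => eps z - eps j) {j : Fin n | j ≠ z} := by
      intro j _ k _ h; exact sub_inj h
    have hi2 : Set.InjOn (fun j => eps z + eps j) {j : Fin n | j ≠ z} := by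
      intro j _ k _ h; exact add_inj h
    rw [hΔpeq, Set.ncard_union_eq hd1 hfin1 (hfin2.union hfin3),
      Set.ncard_union_eq hd2 hfin2 hfin3,
      Set.ncard_image_of_injOn hi1, Set.ncard_image_of_injOn hi2, hcardJ,
      Set.ncard_singleton]
    omega
  have hTeq : {S : Set (Fin n → ℝ) | S ⊆ Δp ∧
      S.Pairwise (fun x y => x + y ∉ ΔB ∧ x - y ∉ ΔB)} =
      insert ∅ ((fun v => ({v} : Set (Fin n → ℝ))) '' Δp ∪
        (fun j => ({eps z - eps j, eps z + eps j} : Set (Fin n → ℝ))) ''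
          {j : Fin n | j ≠ z}) := by
    ext S
    simp only [Set.mem_setOf_eq, Set.mem_insert_iff, Set.mem_union, Set.mem_image]
    constructor
    · rintro ⟨hSp, hP⟩
      rcases (part1 S hSp).1 hP with rfl | ⟨v, hv, rfl⟩ | ⟨j, hj, rfl⟩
      · exact Or.inl rfl
      · exact Or.inr (Or.inl ⟨v, hv, rfl⟩)
      · exact Or.inr (Or.inr ⟨j, hj, rfl⟩)
    · rintro (rfl | ⟨v, hv, rfl⟩ | ⟨j, hj, rfl⟩)
      · exact ⟨Set.empty_subset _, Set.pairwise_empty _⟩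
      · have hsub : ({v} : Set (Fin n → ℝ)) ⊆ Δp := Set.singleton_subset_iff.2 hv
        exact ⟨hsub, (part1 _ hsub).2 (Or.inr (Or.inl ⟨v, hv, rfl⟩))⟩
      · have hsub : ({eps z - eps j, eps z + eps j} : Set (Fin n → ℝ)) ⊆ Δp := by
          intro u hu
          rcases hu with rfl | hu
          · exact (hpmem _).2 (Or.inl ⟨j, hj, Or.inl rfl⟩)
          · rw [Set.mem_singleton_iff] at hu
            subst hu
            exact (hpmem _).2 (Or.inl ⟨j, hj, Or.inr rfl⟩)
        exact ⟨hsub, (part1 _ hsub).2 (Or.inr (Or.inr ⟨j, hj, rfl⟩))⟩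
  have hfinS : ((fun v => ({v} : Set (Fin n → ℝ))) '' Δp).Finite := hfinp.image _
  have hfinP : ((fun j => ({eps z - eps j, eps z + eps j} : Set (Fin n → ℝ))) ''
      {j : Fin n | j ≠ z}).Finite := hfinJ.image _
  have hdS : Disjoint ((fun v => ({v} : Set (Fin n → ℝ))) '' Δp)
      ((fun j => ({eps z - eps j, eps z + eps j} : Set (Fin n → ℝ))) ''
        {j : Fin n | j ≠ z}) := by
    rw [Set.disjoint_left]
    rintro a ⟨v, hv, rfl⟩ ⟨j, hj, hpair⟩
    simp only at hpair
    have hm1 : eps z - eps j ∈ ({v} : Set (Fin n → ℝ)) := by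
      rw [← hpair]; exact Set.mem_insert _ _
    have hm2 : eps z + eps j ∈ ({v} : Set (Fin n → ℝ)) := by
      rw [← hpair]; exact Set.mem_insert_of_mem _ rfl
    rw [Set.mem_singleton_iff] at hm1 hm2
    exact sub_ne_add z j j (hm1.trans hm2.symm)
  have hiP : Set.InjOn (fun j => ({eps z - eps j, eps z + eps j} : Set (Fin n → ℝ)))
      {j : Fin n | j ≠ z} := by
    intro j _ k _ h
    simp only at h
    have hm : eps z - eps j ∈ ({eps z - eps k, eps z + eps k} : Set (Fin n → ℝ)) := by
      rw [← h]; exact Set.mem_insert _ _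
    rcases hm with hm | hm
    · exact sub_inj hm
    · rw [Set.mem_singleton_iff] at hm
      exact absurd hm (sub_ne_add z j k)
  have hnotin : (∅ : Set (Fin n → ℝ)) ∉
      ((fun v => ({v} : Set (Fin n → ℝ))) '' Δp ∪
        (fun j => ({eps z - eps j, eps z + eps j} : Set (Fin n → ℝ))) ''
          {j : Fin n | j ≠ z}) := by
    rintro (⟨v, hv, h⟩ | ⟨j, hj, h⟩)
    · exact Set.singleton_ne_empty v h
    · exact (Set.insert_nonempty _ _).ne_empty h
  rw [hTeq, Set.ncard_insert_of_notMem hnotin (hfinS.union hfinP),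
    Set.ncard_union_eq hdS hfinS hfinP,
    Set.ncard_image_of_injOn (Set.singleton_injective.injOn),
    Set.ncard_image_of_injOn hiP, hcardp, hcardJ]
  omega

/-- For the abelian nilradical `Δ_{𝔭^u} = {ε₁-ε₂,…,ε₁-ε_n, ε₁, ε₁+ε_n,…,ε₁+ε₂}` in type
`B_n` (written `0`-indexed: `ε₁` is `eps 0`), the strongly orthogonal subsets are exactly
the empty set, the `2n-1` singletons, and the `n-1` pairs `{ε₁-ε_j, ε₁+ε_j}`; their total
number is `3n-1`. -/
theorem stmt16 (n : ℕ) (hn : 2 ≤ n) (ΔB Δp : Set (Fin n → ℝ))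
    (hΔB : ΔB = {v | (∃ i j : Fin n, i ≠ j ∧
        (v = eps i - eps j ∨ v = eps i + eps j ∨ v = -eps i - eps j)) ∨
      ∃ i : Fin n, v = eps i ∨ v = -eps i})
    (hΔp : Δp = {v | ∃ j : Fin n, j ≠ ⟨0, by omega⟩ ∧
        (v = eps ⟨0, by omega⟩ - eps j ∨ v = eps ⟨0, by omega⟩ + eps j)} ∪
      {eps ⟨0, by omega⟩}) :
    (∀ S : Set (Fin n → ℝ), S ⊆ Δp →
      (S.Pairwise (fun x y => x + y ∉ ΔB ∧ x - y ∉ ΔB) ↔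
        S = ∅ ∨ (∃ v ∈ Δp, S = {v}) ∨
          ∃ j : Fin n, j ≠ ⟨0, by omega⟩ ∧
            S = {eps ⟨0, by omega⟩ - eps j, eps ⟨0, by omega⟩ + eps j})) ∧
    Set.ncard {S : Set (Fin n → ℝ) | S ⊆ Δp ∧
      S.Pairwise (fun x y => x + y ∉ ΔB ∧ x - y ∉ ΔB)} = 3 * n - 1 := by
  exact aux n hn ⟨0, by omega⟩ ΔB Δp hΔB hΔp
end
end
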